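/- The sequential compound ∗ → ∗ has game value 0, and more generally if G is dicotic then G → ∗ → ∗ = G as game values. -/

import Mathlib

/-!
In a dicotic game a player is out of moves only where both are, so `G → H` is `G` with each of
its terminal positions replaced by `H`; if `H ≈ 0` this replacement does not change the value.
Finally `∗ → ∗ = {∗ | ∗}`, which is `0` because each player's only move leaves `∗`, a win for
the next player.
-/

universe u

namespace SetTheory

/-- Pregames (removed from Mathlib; restated with the old Mathlib meaning). -/
inductive PGame : Type (u + 1)
  | mk : ∀ α β : Type u, (α → PGame) → (β → PGame) → PGame

namespace PGame

def LeftMoves : PGame → Type u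
  | mk l _ _ _ => l

def RightMoves : PGame → Type u
  | mk _ r _ _ => r

def moveLeft : ∀ g : PGame, LeftMoves g → PGame
  | mk _ _ L _ => L

def moveRight : ∀ g : PGame, RightMoves g → PGame
  | mk _ _ _ R => R

instance : Zero PGame := ⟨⟨PEmpty, PEmpty, PEmpty.elim, PEmpty.elim⟩⟩

def star : PGame.{u} :=
  ⟨PUnit, PUnit, fun _ => 0, fun _ => 0⟩

def neg : PGame → PGame
  | ⟨l, r, L, R⟩ => ⟨r, l, fun i => neg (R i), fun i => neg (L i)⟩

instance : Neg PGame := ⟨neg⟩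

/-- Auxiliary for `add`: `x + y` by recursion on `y`, given `xL i + ·` and `xR j + ·`. -/
def addAux (xl xr : Type u) (IHl : xl → PGame.{u} → PGame.{u}) (IHr : xr → PGame.{u} → PGame.{u}) :
    PGame.{u} → PGame.{u}
  | mk yl yr yL yR =>
    mk (xl ⊕ yl) (xr ⊕ yr) (Sum.elim (fun i => IHl i (mk yl yr yL yR)) (fun j => addAux xl xr IHl IHr (yL j)))
      (Sum.elim (fun i => IHr i (mk yl yr yL yR)) (fun j => addAux xl xr IHl IHr (yR j)))

def add : PGame.{u} → PGame.{u} → PGame.{u}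
  | mk xl xr xL xR => addAux xl xr (fun i => add (xL i)) (fun i => add (xR i))

instance : Add PGame.{u} := ⟨add⟩

instance : Sub PGame.{u} := ⟨fun x y => x + -y⟩

/-- Auxiliary for `leLF`: recursion on `y`. -/
def leLFAux (xl xr : Type u) (IHl : xl → PGame.{u} → Prop × Prop) (IHr : xr → PGame.{u} → Prop × Prop) :
    PGame.{u} → Prop × Prop
  | mk yl yr yL yR =>
    ((∀ i, (IHl i (mk yl yr yL yR)).2) ∧ ∀ j, (leLFAux xl xr IHl IHr (yR j)).2,
      (∃ i, (leLFAux xl xr IHl IHr (yL i)).1) ∨ ∃ j, (IHr j (mk yl yr yL yR)).1)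

/-- The pair `(x ≤ y, x ⧏ y)`, defined by simultaneous recursion as in old Mathlib. -/
def leLF : PGame.{u} → PGame.{u} → Prop × Prop
  | mk xl xr xL xR => leLFAux xl xr (fun i => leLF (xL i)) (fun i => leLF (xR i))

instance : LE PGame.{u} := ⟨fun x y => (leLF x y).1⟩

def Equiv (x y : PGame.{u}) : Prop := x ≤ y ∧ y ≤ x

instance : HasEquiv PGame.{u} := ⟨Equiv⟩

/-- A short game: finitely many positions. -/
class inductive Short : PGame.{u} → Type (u + 1)
  | mk : ∀ {α β : Type u} {L : α → PGame.{u}} {R : β → PGame.{u}} (_ : ∀ i : α, Short (L i))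
      (_ : ∀ j : β, Short (R j)) [Fintype α] [Fintype β], Short ⟨α, β, L, R⟩

end PGame

end SetTheory

open SetTheory

open scoped PGame

namespace SeqCompound

open Classical in
/-- The sequential compound `G → H` of two pregames. -/
noncomputable def seqc : PGame → PGame → PGame
  | PGame.mk α β L R, H =>
    if Nonempty α then
      if Nonempty β then
        PGame.mk α β (fun a => seqc (L a) H) (fun b => seqc (R b) H)
      else
        PGame.mk α H.RightMoves (fun a => seqc (L a) H) H.moveRight
    else
      if Nonempty β then
        PGame.mk H.LeftMoves β H.moveLeft (fun b => seqc (R b) H)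
      else H

/-- A pregame is dicotic (all-small) if in every subposition,
Left has an option iff Right has an option. -/
def Dicotic : PGame → Prop
  | PGame.mk α β L R =>
    (Nonempty α ↔ Nonempty β) ∧ (∀ a, Dicotic (L a)) ∧ (∀ b, Dicotic (R b))

/-- The canonical nonnegative integer game `{n-1 | }`. -/
def intGame : ℕ → PGame
  | 0 => 0
  | n + 1 => PGame.mk PUnit PEmpty (fun _ => intGame n) PEmpty.elim

/-- `upSum k` is the disjunctive sum `↑¹ + ↑² + ⋯ + ↑ᵏ`. -/
def upSum : ℕ → PGame
  | 0 => 0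
  | k + 1 => upSum k +
      PGame.mk PUnit PUnit (fun _ => 0) (fun _ => PGame.star - upSum k)

/-- `upPow k` is the game `↑^(k+1) = {0 | ∗ - (↑¹ + ⋯ + ↑ᵏ)}`. -/
def upPow (k : ℕ) : PGame :=
  PGame.mk PUnit PUnit (fun _ => 0) (fun _ => PGame.star - upSum k)

/-- Sequential compound of a list of games. -/
noncomputable def seqList : List PGame → PGame
  | [] => 0
  | G :: l => seqc G (seqList l)

end SeqCompound

namespace SetTheory.PGame

def LF (x y : PGame.{u}) : Prop := (leLF x y).2

infix:50 " ⧏ " => LF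

variable {xl xr yl yr : Type u} {xL : xl → PGame.{u}} {xR : xr → PGame.{u}}
  {yL : yl → PGame.{u}} {yR : yr → PGame.{u}}

theorem mk_le_mk :
    mk xl xr xL xR ≤ mk yl yr yL yR ↔
      (∀ i, xL i ⧏ mk yl yr yL yR) ∧ ∀ j, mk xl xr xL xR ⧏ yR j :=
  Iff.rfl

theorem mk_lf_mk :
    mk xl xr xL xR ⧏ mk yl yr yL yR ↔
      (∃ i, mk xl xr xL xR ≤ yL i) ∨ ∃ j, xR j ≤ mk yl yr yL yR :=
  Iff.rfl

theorem lf_mk_of_le_moveLeft {x : PGame.{u}} (i : yl) (h : x ≤ yL i) : x ⧏ mk yl yr yL yR := by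
  cases x
  exact mk_lf_mk.2 (Or.inl ⟨i, h⟩)

theorem mk_lf_of_moveRight_le {y : PGame.{u}} (j : xr) (h : xR j ≤ y) : mk xl xr xL xR ⧏ y := by
  cases y
  exact mk_lf_mk.2 (Or.inr ⟨j, h⟩)

protected theorem le_refl : ∀ x : PGame.{u}, x ≤ x
  | mk _ _ xL xR => mk_le_mk.2
      ⟨fun i => lf_mk_of_le_moveLeft i (PGame.le_refl (xL i)),
        fun j => mk_lf_of_moveRight_le j (PGame.le_refl (xR j))⟩

theorem mk_equiv_mk {L L' : xl → PGame.{u}} {R R' : xr → PGame.{u}}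
    (hL : ∀ i, L i ≈ L' i) (hR : ∀ j, R j ≈ R' j) : mk xl xr L R ≈ mk xl xr L' R' :=
  ⟨mk_le_mk.2 ⟨fun i => lf_mk_of_le_moveLeft i (hL i).1, fun j => mk_lf_of_moveRight_le j (hR j).1⟩,
    mk_le_mk.2 ⟨fun i => lf_mk_of_le_moveLeft i (hL i).2, fun j => mk_lf_of_moveRight_le j (hR j).2⟩⟩

section Empty

variable [IsEmpty xl] [IsEmpty xr] [IsEmpty yl] [IsEmpty yr]

theorem le_and_lf_mk_congr_of_isEmpty (z : PGame.{u}) :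
    (z ≤ mk xl xr xL xR ↔ z ≤ mk yl yr yL yR) ∧ (z ⧏ mk xl xr xL xR ↔ z ⧏ mk yl yr yL yR) := by
  induction z with
  | mk zl zr zL zR IHL IHR =>
    refine ⟨?_, ?_⟩
    · simp only [mk_le_mk, IsEmpty.forall_iff, and_true]
      exact forall_congr' fun i => (IHL i).2
    · simp only [mk_lf_mk, IsEmpty.exists_iff, false_or]
      exact exists_congr fun j => (IHR j).1

theorem mk_le_and_lf_congr_of_isEmpty (z : PGame.{u}) :
    (mk xl xr xL xR ≤ z ↔ mk yl yr yL yR ≤ z) ∧ (mk xl xr xL xR ⧏ z ↔ mk yl yr yL yR ⧏ z) := by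
  induction z with
  | mk zl zr zL zR IHL IHR =>
    refine ⟨?_, ?_⟩
    · simp only [mk_le_mk, IsEmpty.forall_iff, true_and]
      exact forall_congr' fun j => (IHR j).2
    · simp only [mk_lf_mk, IsEmpty.exists_iff, or_false]
      exact exists_congr fun i => (IHL i).1

end Empty

theorem equiv_mk_of_equiv_zero_of_isEmpty [IsEmpty xl] [IsEmpty xr] {z : PGame.{u}} (hz : z ≈ 0) :
    z ≈ mk xl xr xL xR :=
  ⟨(le_and_lf_mk_congr_of_isEmpty (xL := PEmpty.elim) (xR := PEmpty.elim) z).1.1 hz.1,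
    (mk_le_and_lf_congr_of_isEmpty (xL := PEmpty.elim) (xR := PEmpty.elim) z).1.1 hz.2⟩

end SetTheory.PGame

namespace SeqCompound

open PGame

variable {α β : Type u} {L : α → PGame.{u}} {R : β → PGame.{u}}

theorem seqc_mk_of_nonempty [Nonempty α] [Nonempty β] (H : PGame.{u}) :
    seqc (PGame.mk α β L R) H = PGame.mk α β (fun a => seqc (L a) H) (fun b => seqc (R b) H) := by
  rw [seqc, if_pos ‹_›, if_pos ‹_›]

theorem seqc_mk_of_isEmpty [IsEmpty α] [IsEmpty β] (H : PGame.{u}) :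
    seqc (PGame.mk α β L R) H = H := by
  rw [seqc, if_neg (not_nonempty_iff.2 ‹_›), if_neg (not_nonempty_iff.2 ‹_›)]

theorem seqc_zero (H : PGame.{u}) : seqc 0 H = H :=
  seqc_mk_of_isEmpty H

theorem star_seqc_star : seqc star star = PGame.mk PUnit PUnit (fun _ => star) (fun _ => star) := by
  change seqc (PGame.mk PUnit PUnit (fun _ => 0) (fun _ => 0)) star = _
  simp only [seqc_mk_of_nonempty, seqc_zero]

theorem star_seqc_star_equiv_zero : seqc star star ≈ 0 := by
  rw [star_seqc_star]
  exact ⟨mk_le_mk.2 ⟨fun _ => mk_lf_of_moveRight_le PUnit.unit (PGame.le_refl 0), isEmptyElim⟩,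
    mk_le_mk.2 ⟨isEmptyElim, fun _ => lf_mk_of_le_moveLeft PUnit.unit (PGame.le_refl 0)⟩⟩

theorem Dicotic.seqc_equiv {H : PGame.{u}} (hH : H ≈ 0) :
    ∀ {G : PGame.{u}}, Dicotic G → seqc G H ≈ G
  | PGame.mk α β L R, ⟨hαβ, hL, hR⟩ => by
    by_cases hα : Nonempty α
    · have : Nonempty β := hαβ.1 hα
      rw [seqc_mk_of_nonempty]
      exact mk_equiv_mk (fun a => Dicotic.seqc_equiv hH (hL a))
        (fun b => Dicotic.seqc_equiv hH (hR b))
    · have : IsEmpty α := not_nonempty_iff.1 hα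
      have : IsEmpty β := not_nonempty_iff.1 (mt hαβ.2 hα)
      rw [seqc_mk_of_isEmpty]
      exact equiv_mk_of_equiv_zero_of_isEmpty hH

end SeqCompound

open SeqCompound in
theorem seqc_star_star_general (G : PGame) (hG : Dicotic G) :
    (seqc PGame.star PGame.star ≈ 0) ∧ seqc G (seqc PGame.star PGame.star) ≈ G :=
  ⟨star_seqc_star_equiv_zero, hG.seqc_equiv star_seqc_star_equiv_zero⟩

open SeqCompound in
/-- `∗ → ∗ = 0`, and if `G` is dicotic then `G → ∗ → ∗ = G` as game values. -/
theorem seqc_star_star (G : PGame) [PGame.Short G] (hG : Dicotic G) :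
    (seqc PGame.star PGame.star ≈ 0) ∧ seqc G (seqc PGame.star PGame.star) ≈ G :=
  seqc_star_star_general G hG
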